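/- arXiv:2502.12882 — 3 statements merged into one kernel-verified Lean document; each statement's English description precedes it below -/
import Mathlib

section
/- Let O and ρ be operators on an l-qubit space with O ≠ 0, and define the probability distribution q(a) = |χ_O(a)|²/(2^l ‖O‖₂²) on {0,1,2,3}^l, where χ_Q(a) = Tr[Q P_a] and ‖O‖₂² = Tr[O†O]. Define the random variable X(a) = ‖O‖₂² χ_ρ(a)/χ_O(a)* on the support of q. Then (1) q is a probability distribution (sums to 1), (2) the expectation E_q[X] = Tr[ρ O] when ρ, O are Hermitian, and (3) E_q[|X|²] ≤ ‖O‖₂² ‖ρ‖₂². -/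
/-!
The one-qubit Pauli matrices satisfy the completeness relation
`∑ σ, σ i j * σ i' j' = 2 δ(i, j') δ(j, i')` (that is, `∑ σ ⊗ σ = 2 · SWAP`), which tensorises
to Pauli strings and gives `∑ a, χ_A(a) χ_B(a) = 2^l Tr[A B]` for all matrices `A`, `B`.
Pauli strings are Hermitian, so `conj χ_A = χ_{A†}` and this contains Parseval's identity
`∑ a, |χ_A(a)|² = 2^l ‖A‖₂²`. On the support of `q` one has `q(a) X(a) = χ_O(a) χ_ρ(a) / 2^l`
and `q(a) |X(a)|² = ‖O‖₂² |χ_ρ(a)|² / 2^l`, and summing these gives the three claims.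
-/

open Matrix

noncomputable def pauli : Fin 4 → Matrix (Fin 2) (Fin 2) ℂ
  | 0 => !![1, 0; 0, 1]
  | 1 => !![0, 1; 1, 0]
  | 2 => !![0, -Complex.I; Complex.I, 0]
  | 3 => !![1, 0; 0, -1]

noncomputable def pauliString (l : ℕ) (a : Fin l → Fin 4) :
    Matrix (Fin l → Fin 2) (Fin l → Fin 2) ℂ :=
  fun i j => ∏ k, pauli (a k) (i k) (j k)

/-- The Pauli characteristic function `χ_Q(a) = Tr[Q P_a]`. -/
noncomputable def pauliChar (l : ℕ) (Q : Matrix (Fin l → Fin 2) (Fin l → Fin 2) ℂ)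
    (a : Fin l → Fin 4) : ℂ :=
  (Q * pauliString l a).trace

/-- Squared Hilbert–Schmidt (Frobenius) norm `‖A‖₂² = Tr[A†A] = ∑_{ij} |A_{ij}|²`. -/
noncomputable def hsNormSq {n : Type*} [Fintype n] (A : Matrix n n ℂ) : ℝ :=
  ∑ i, ∑ j, ‖A i j‖ ^ 2

lemma pauli_conjTranspose (m : Fin 4) : (pauli m)ᴴ = pauli m := by
  ext i j
  fin_cases m <;> fin_cases i <;> fin_cases j <;> simp [pauli]

lemma sum_pauli_apply_mul_pauli_apply (i j i' j' : Fin 2) :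
    ∑ m, pauli m i j * pauli m i' j' = if i = j' ∧ j = i' then 2 else 0 := by
  fin_cases i <;> fin_cases j <;> fin_cases i' <;> fin_cases j' <;>
    norm_num [Fin.sum_univ_four, pauli]

lemma pauliString_conjTranspose (l : ℕ) (a : Fin l → Fin 4) :
    (pauliString l a)ᴴ = pauliString l a := by
  ext i j
  simp only [conjTranspose_apply, pauliString, star_prod]
  exact Finset.prod_congr rfl fun k _ => congrFun₂ (pauli_conjTranspose (a k)) (i k) (j k)

lemma sum_pauliString_apply_mul_pauliString_apply (l : ℕ) (i j i' j' : Fin l → Fin 2) :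
    ∑ a, pauliString l a i j * pauliString l a i' j' =
      if i = j' ∧ j = i' then 2 ^ l else 0 := by
  simp only [pauliString, ← Finset.prod_mul_distrib]
  rw [← Fintype.prod_sum (fun k m => pauli m (i k) (j k) * pauli m (i' k) (j' k))]
  simp only [sum_pauli_apply_mul_pauli_apply, Fintype.prod_ite_zero, forall_and, ← funext_iff,
    Finset.prod_const, Finset.card_univ, Fintype.card_fin]

lemma pauliChar_eq_sum (l : ℕ) (A : Matrix (Fin l → Fin 2) (Fin l → Fin 2) ℂ) (a : Fin l → Fin 4) :
    pauliChar l A a = ∑ i, ∑ j, A i j * pauliString l a j i := by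
  simp only [pauliChar, trace, diag, mul_apply]

lemma sum_pauliChar_mul_pauliChar (l : ℕ) (A B : Matrix (Fin l → Fin 2) (Fin l → Fin 2) ℂ) :
    ∑ a, pauliChar l A a * pauliChar l B a = 2 ^ l * (A * B).trace := by
  calc ∑ a, pauliChar l A a * pauliChar l B a
      = ∑ i', ∑ j', ∑ i, ∑ j, A i j * B i' j' *
          ∑ a, pauliString l a j i * pauliString l a j' i' := by
        simp only [pauliChar_eq_sum, Finset.sum_mul, Finset.mul_sum]
        rw [Finset.sum_comm]
        refine Finset.sum_congr rfl fun i' _ => ?_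
        rw [Finset.sum_comm]
        refine Finset.sum_congr rfl fun j' _ => ?_
        rw [Finset.sum_comm]
        refine Finset.sum_congr rfl fun i _ => ?_
        rw [Finset.sum_comm]
        exact Finset.sum_congr rfl fun j _ => Finset.sum_congr rfl fun a _ => by ring
    _ = 2 ^ l * (A * B).trace := by
        simp only [sum_pauliString_apply_mul_pauliString_apply, ite_and, mul_ite, mul_zero,
          Finset.sum_ite_eq', Finset.mem_univ, ↓reduceIte, trace, diag_apply, mul_apply,
          Finset.mul_sum]
        rw [Finset.sum_comm]
        exact Finset.sum_congr rfl fun i _ => Finset.sum_congr rfl fun j _ => by ring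

lemma star_pauliChar (l : ℕ) (A : Matrix (Fin l → Fin 2) (Fin l → Fin 2) ℂ) (a : Fin l → Fin 4) :
    star (pauliChar l A a) = pauliChar l Aᴴ a := by
  rw [pauliChar, pauliChar, ← trace_conjTranspose, conjTranspose_mul, pauliString_conjTranspose,
    trace_mul_comm]

lemma ofReal_hsNormSq {n : Type*} [Fintype n] (A : Matrix n n ℂ) :
    (hsNormSq A : ℂ) = (A * Aᴴ).trace := by
  simp [hsNormSq, trace, mul_apply, Complex.mul_conj']

lemma sum_norm_pauliChar_sq (l : ℕ) (A : Matrix (Fin l → Fin 2) (Fin l → Fin 2) ℂ) :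
    ∑ a, ‖pauliChar l A a‖ ^ 2 = 2 ^ l * hsNormSq A := by
  have h : ((∑ a, ‖pauliChar l A a‖ ^ 2 : ℝ) : ℂ) = ((2 ^ l * hsNormSq A : ℝ) : ℂ) := by
    push_cast
    simp only [← Complex.mul_conj', Complex.star_def.symm, star_pauliChar,
      sum_pauliChar_mul_pauliChar, ofReal_hsNormSq]
  exact_mod_cast h

lemma hsNormSq_pos {n : Type*} [Fintype n] {A : Matrix n n ℂ} (hA : A ≠ 0) : 0 < hsNormSq A := by
  obtain ⟨i, j, hij⟩ : ∃ i j, A i j ≠ 0 := by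
    by_contra! h
    exact hA (Matrix.ext h)
  exact Finset.sum_pos' (fun i _ => Finset.sum_nonneg fun j _ => by positivity)
    ⟨i, Finset.mem_univ i, Finset.sum_pos' (fun j _ => by positivity)
      ⟨j, Finset.mem_univ j, pow_pos (norm_pos_iff.mpr hij) 2⟩⟩

lemma sq_norm_div_mul_ite_div_conj {z w : ℂ} {c s : ℝ} (hc : c ≠ 0) :
    ((‖z‖ ^ 2 / (s * c) : ℝ) : ℂ) * (if z = 0 then 0 else (c : ℂ) * w / starRingEnd ℂ z) =
      z * w / s := by
  split_ifs with hz
  · simp [hz]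
  · have hz' : starRingEnd ℂ z ≠ 0 := by simpa using hz
    have hc' : (c : ℂ) ≠ 0 := by exact_mod_cast hc
    push_cast
    rw [← Complex.mul_conj']
    field_simp

lemma sq_norm_div_mul_norm_ite_div_conj_sq_le {z w : ℂ} {c s : ℝ} (hc : 0 ≤ c) (hs : 0 ≤ s) :
    ‖z‖ ^ 2 / (s * c) * ‖if z = 0 then 0 else (c : ℂ) * w / starRingEnd ℂ z‖ ^ 2 ≤
      c * ‖w‖ ^ 2 / s := by
  split_ifs with hz
  · rw [norm_zero, zero_pow two_ne_zero, mul_zero]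
    positivity
  · have hz' : ‖z‖ ≠ 0 := norm_ne_zero_iff.mpr hz
    apply le_of_eq
    rw [norm_div, norm_mul, Complex.norm_real, Real.norm_of_nonneg hc, Complex.norm_conj]
    field_simp

theorem pauli_sampling_estimator_general (l : ℕ)
    (O ρ : Matrix (Fin l → Fin 2) (Fin l → Fin 2) ℂ)
    (hO0 : O ≠ 0)
    (q : (Fin l → Fin 4) → ℝ)
    (hq : ∀ a, q a = ‖pauliChar l O a‖ ^ 2 / (2 ^ l * hsNormSq O))
    (X : (Fin l → Fin 4) → ℂ)
    (hX : ∀ a, X a = if pauliChar l O a = 0 then 0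
      else (hsNormSq O : ℂ) * pauliChar l ρ a / (starRingEnd ℂ) (pauliChar l O a)) :
    (∑ a, q a = 1) ∧
    (∑ a, (q a : ℂ) * X a = (ρ * O).trace) ∧
    (∑ a, q a * ‖X a‖ ^ 2 ≤ hsNormSq O * hsNormSq ρ) := by
  have hN : 0 < hsNormSq O := hsNormSq_pos hO0
  refine ⟨?_, ?_, ?_⟩
  · rw [Finset.sum_congr rfl fun a _ => hq a, ← Finset.sum_div, sum_norm_pauliChar_sq]
    field_simp
  · simp only [hq, hX, sq_norm_div_mul_ite_div_conj hN.ne']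
    rw [← Finset.sum_div, sum_pauliChar_mul_pauliChar, trace_mul_comm]
    push_cast
    field_simp
  · calc ∑ a, q a * ‖X a‖ ^ 2 ≤ ∑ a, hsNormSq O * ‖pauliChar l ρ a‖ ^ 2 / 2 ^ l := by
          refine Finset.sum_le_sum fun a _ => ?_
          rw [hq, hX]
          exact sq_norm_div_mul_norm_ite_div_conj_sq_le hN.le (by positivity)
      _ = hsNormSq O * hsNormSq ρ := by
          rw [← Finset.sum_div, ← Finset.mul_sum, sum_norm_pauliChar_sq]
          field_simp

/-- The sampling distribution `q(a) = |χ_O(a)|²/(2^l ‖O‖₂²)` and random variable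
`X(a) = ‖O‖₂² χ_ρ(a)/χ_O(a)*` (set to `0` off the support of `q`) satisfy:
(1) `q` is a probability distribution, (2) `E_q[X] = Tr[ρ O]` for Hermitian `ρ, O`,
(3) `E_q[|X|²] ≤ ‖O‖₂² ‖ρ‖₂²`. -/
theorem pauli_sampling_estimator (l : ℕ)
    (O ρ : Matrix (Fin l → Fin 2) (Fin l → Fin 2) ℂ)
    (hO : O.IsHermitian) (hρ : ρ.IsHermitian) (hO0 : O ≠ 0)
    (q : (Fin l → Fin 4) → ℝ)
    (hq : ∀ a, q a = ‖pauliChar l O a‖ ^ 2 / (2 ^ l * hsNormSq O))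
    (X : (Fin l → Fin 4) → ℂ)
    (hX : ∀ a, X a = if pauliChar l O a = 0 then 0
      else (hsNormSq O : ℂ) * pauliChar l ρ a / (starRingEnd ℂ) (pauliChar l O a)) :
    (∑ a, q a = 1) ∧
    (∑ a, (q a : ℂ) * X a = (ρ * O).trace) ∧
    (∑ a, q a * ‖X a‖ ^ 2 ≤ hsNormSq O * hsNormSq ρ) :=
  pauli_sampling_estimator_general l O ρ hO0 q hq X hX
end

section
/- If a circuit consists of Clifford gates and t T-gates, then the conjugate U† P U of any Pauli string P by the circuit is a real linear combination of at most 2^t Pauli strings (up to phases). -/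
open Matrix

/-- The T gate acting on qubit `k` of `l` qubits: the diagonal matrix with entry
`e^{iπ/4}` when the `k`-th bit is `1`. -/
noncomputable def TgateOn (l : ℕ) (k : Fin l) :
    Matrix (Fin l → Fin 2) (Fin l → Fin 2) ℂ :=
  fun i j => if i = j then Complex.exp (Complex.I * Real.pi / 4 * ((i k : ℕ) : ℂ)) else 0

/-- A Clifford gate: a unitary mapping every Pauli string to a Pauli string up to sign
under conjugation. -/
def IsCliffordGate (l : ℕ) (G : Matrix (Fin l → Fin 2) (Fin l → Fin 2) ℂ) : Prop :=
  G ∈ Matrix.unitaryGroup (Fin l → Fin 2) ℂ ∧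
  ∀ a : Fin l → Fin 4, ∃ (s : ℂ) (b : Fin l → Fin 4),
    (s = 1 ∨ s = -1) ∧ Gᴴ * pauliString l a * G = s • pauliString l b

/-!
Conjugation by a Clifford gate sends a Pauli string to a Pauli string up to sign, and conjugation
by a T gate on qubit `k` sends it to a combination of at most two Pauli strings: the T gate is
diagonal, so conjugating by it keeps the `k`-th tensor factor diagonal (a combination of `I`, `Z`)
or off-diagonal (a combination of `X`, `Y`) and leaves the other factors alone. Conjugation is
linear, so peeling the gates off the circuit one at a time multiplies the bound by `2` exactly
once per T gate.
-/

section SparseSpan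

variable (R : Type*) {ι κ M N : Type*} [Semiring R] [AddCommMonoid M] [Module R M]
  [AddCommMonoid N] [Module R N]

def sparseSpan (v : ι → M) (n : ℕ) : Set M :=
  {x | ∃ f : ι →₀ R, f.support.card ≤ n ∧ Finsupp.linearCombination R v f = x}

variable {R}

theorem sparseSpan_mono {v : ι → M} {m n : ℕ} (h : m ≤ n) : sparseSpan R v m ⊆ sparseSpan R v n :=
  fun _ ⟨f, hf, hfx⟩ => ⟨f, hf.trans h, hfx⟩

theorem zero_mem_sparseSpan (v : ι → M) : (0 : M) ∈ sparseSpan R v 0 :=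
  ⟨0, by simp, by simp⟩

theorem smul_mem_sparseSpan_one (v : ι → M) (c : R) (i : ι) : c • v i ∈ sparseSpan R v 1 :=
  ⟨Finsupp.single i c, (Finset.card_le_card Finsupp.support_single_subset).trans_eq
    (Finset.card_singleton i), by simp⟩

theorem mem_sparseSpan_one (v : ι → M) (i : ι) : v i ∈ sparseSpan R v 1 := by
  simpa using smul_mem_sparseSpan_one v (1 : R) i

theorem smul_mem_sparseSpan {v : ι → M} {n : ℕ} {x : M} (c : R) (hx : x ∈ sparseSpan R v n) :
    c • x ∈ sparseSpan R v n := by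
  obtain ⟨f, hf, rfl⟩ := hx
  exact ⟨c • f, (Finset.card_le_card Finsupp.support_smul).trans hf, map_smul _ c f⟩

theorem add_mem_sparseSpan {v : ι → M} {m n : ℕ} {x y : M} (hx : x ∈ sparseSpan R v m)
    (hy : y ∈ sparseSpan R v n) : x + y ∈ sparseSpan R v (m + n) := by
  classical
  obtain ⟨f, hf, rfl⟩ := hx
  obtain ⟨g, hg, rfl⟩ := hy
  refine ⟨f + g, ?_, map_add _ f g⟩
  calc (f + g).support.card ≤ (f.support ∪ g.support).card :=
        Finset.card_le_card Finsupp.support_add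
    _ ≤ m + n := (Finset.card_union_le _ _).trans (add_le_add hf hg)

theorem sum_mem_sparseSpan {v : ι → M} {m : ℕ} (s : Finset κ) {g : κ → M}
    (h : ∀ j ∈ s, g j ∈ sparseSpan R v m) : ∑ j ∈ s, g j ∈ sparseSpan R v (s.card * m) := by
  induction s using Finset.cons_induction with
  | empty => simpa using zero_mem_sparseSpan v
  | cons j s hj ih =>
    rw [Finset.sum_cons, Finset.card_cons, add_one_mul, add_comm _ m]
    exact add_mem_sparseSpan (h j (Finset.mem_cons_self j s))
      (ih fun j' hj' => h j' (Finset.mem_cons_of_mem hj'))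

theorem map_mem_sparseSpan {v : ι → M} {w : κ → N} {m n : ℕ} {x : M} (φ : M →ₗ[R] N)
    (hφ : ∀ i, φ (v i) ∈ sparseSpan R w m) (hx : x ∈ sparseSpan R v n) :
    φ x ∈ sparseSpan R w (n * m) := by
  obtain ⟨f, hf, rfl⟩ := hx
  rw [Finsupp.linearCombination_apply, Finsupp.sum, map_sum]
  simp only [map_smul]
  exact sparseSpan_mono (Nat.mul_le_mul_right m hf)
    (sum_mem_sparseSpan _ fun i _ => smul_mem_sparseSpan (f i) (hφ i))

end SparseSpan

theorem conjTranspose_diagonal_mul_mul_diagonal_apply {n α : Type*} [Fintype n] [DecidableEq n]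
    [Semiring α] [StarRing α] (δ : n → α) (A : Matrix n n α) (i j : n) :
    ((diagonal δ)ᴴ * A * diagonal δ) i j = star (δ i) * A i j * δ j := by
  rw [diagonal_conjTranspose, mul_diagonal, diagonal_mul, Pi.star_apply]

theorem mem_sparseSpan_pauli_of_offDiag_eq_zero {A : Matrix (Fin 2) (Fin 2) ℂ}
    (h₀₁ : A 0 1 = 0) (h₁₀ : A 1 0 = 0) : A ∈ sparseSpan ℂ pauli 2 := by
  have hA : A = ((A 0 0 + A 1 1) / 2) • pauli 0 + ((A 0 0 - A 1 1) / 2) • pauli 3 := by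
    ext i j
    fin_cases i <;> fin_cases j <;> simp [pauli, h₀₁, h₁₀] <;> ring
  rw [hA]
  exact add_mem_sparseSpan (smul_mem_sparseSpan_one _ _ _) (smul_mem_sparseSpan_one _ _ _)

theorem mem_sparseSpan_pauli_of_diag_eq_zero {A : Matrix (Fin 2) (Fin 2) ℂ}
    (h₀₀ : A 0 0 = 0) (h₁₁ : A 1 1 = 0) : A ∈ sparseSpan ℂ pauli 2 := by
  have hA : A = ((A 0 1 + A 1 0) / 2) • pauli 1 + (Complex.I * (A 0 1 - A 1 0) / 2) • pauli 2 := by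
    ext i j
    fin_cases i <;> fin_cases j <;> simp [pauli, h₀₀, h₁₁] <;> ring_nf <;> simp [Complex.I_sq] <;>
      ring
  rw [hA]
  exact add_mem_sparseSpan (smul_mem_sparseSpan_one _ _ _) (smul_mem_sparseSpan_one _ _ _)

theorem conj_diagonal_pauli_mem_sparseSpan (δ : Fin 2 → ℂ) (v : Fin 4) :
    (diagonal δ)ᴴ * pauli v * diagonal δ ∈ sparseSpan ℂ pauli 2 := by
  fin_cases v <;>
    [apply mem_sparseSpan_pauli_of_offDiag_eq_zero; apply mem_sparseSpan_pauli_of_diag_eq_zero;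
      apply mem_sparseSpan_pauli_of_diag_eq_zero; apply mem_sparseSpan_pauli_of_offDiag_eq_zero] <;>
    simp [pauli]

variable {l : ℕ}

/-- The Pauli string `a` with its `k`-th tensor factor replaced by `A`. -/
noncomputable def replaceFactor (k : Fin l) (a : Fin l → Fin 4) :
    Matrix (Fin 2) (Fin 2) ℂ →ₗ[ℂ] Matrix (Fin l → Fin 2) (Fin l → Fin 2) ℂ where
  toFun A := of fun i j => A (i k) (j k) * ∏ m ∈ Finset.univ.erase k, pauli (a m) (i m) (j m)
  map_add' A B := by ext; simp [add_mul]
  map_smul' c A := by ext; simp [mul_assoc]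

theorem replaceFactor_apply (k : Fin l) (a : Fin l → Fin 4) (A : Matrix (Fin 2) (Fin 2) ℂ)
    (i j : Fin l → Fin 2) :
    replaceFactor k a A i j = A (i k) (j k) * ∏ m ∈ Finset.univ.erase k, pauli (a m) (i m) (j m) :=
  rfl

theorem replaceFactor_pauli (k : Fin l) (a : Fin l → Fin 4) (w : Fin 4) :
    replaceFactor k a (pauli w) = pauliString l (Function.update a k w) := by
  ext i j
  rw [replaceFactor_apply, pauliString, ← Finset.mul_prod_erase _ _ (Finset.mem_univ k),
    Function.update_self]
  exact congrArg _ (Finset.prod_congr rfl fun m hm => by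
    rw [Function.update_of_ne (Finset.ne_of_mem_erase hm)])

theorem replaceFactor_mem_sparseSpan (k : Fin l) (a : Fin l → Fin 4) {n : ℕ}
    {A : Matrix (Fin 2) (Fin 2) ℂ} (hA : A ∈ sparseSpan ℂ pauli n) :
    replaceFactor k a A ∈ sparseSpan ℂ (pauliString l) n := by
  have hpauli (w : Fin 4) : replaceFactor k a (pauli w) ∈ sparseSpan ℂ (pauliString l) 1 :=
    replaceFactor_pauli k a w ▸ mem_sparseSpan_one _ _
  simpa using map_mem_sparseSpan (replaceFactor k a) hpauli hA

theorem conj_diagonalOn_pauliString (k : Fin l) (δ : Fin 2 → ℂ) (a : Fin l → Fin 4) :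
    (diagonal fun i => δ (i k))ᴴ * pauliString l a * diagonal (fun i => δ (i k)) =
      replaceFactor k a ((diagonal δ)ᴴ * pauli (a k) * diagonal δ) := by
  ext i j
  rw [conjTranspose_diagonal_mul_mul_diagonal_apply, pauliString,
    ← Finset.mul_prod_erase _ _ (Finset.mem_univ k), replaceFactor_apply,
    conjTranspose_diagonal_mul_mul_diagonal_apply]
  ring

def PauliSparseConj (l n : ℕ) (U : Matrix (Fin l → Fin 2) (Fin l → Fin 2) ℂ) : Prop :=
  ∀ a, Uᴴ * pauliString l a * U ∈ sparseSpan ℂ (pauliString l) n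

theorem pauliSparseConj_one : PauliSparseConj l 1 1 := fun a => by
  simpa using mem_sparseSpan_one (R := ℂ) (pauliString l) a

theorem PauliSparseConj.mul {m n : ℕ} {G W : Matrix (Fin l → Fin 2) (Fin l → Fin 2) ℂ}
    (hG : PauliSparseConj l m G) (hW : PauliSparseConj l n W) :
    PauliSparseConj l (m * n) (G * W) := fun a => by
  have hconj : (G * W)ᴴ * pauliString l a * (G * W) = Wᴴ * (Gᴴ * pauliString l a * G) * W := by
    simp only [conjTranspose_mul, Matrix.mul_assoc]
  rw [hconj]
  exact map_mem_sparseSpan ((LinearMap.mulRight ℂ W).comp (LinearMap.mulLeft ℂ Wᴴ)) hW (hG a)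

theorem IsCliffordGate.pauliSparseConj {G : Matrix (Fin l → Fin 2) (Fin l → Fin 2) ℂ}
    (hG : IsCliffordGate l G) : PauliSparseConj l 1 G := fun a => by
  obtain ⟨s, b, -, hb⟩ := hG.2 a
  exact hb ▸ smul_mem_sparseSpan_one _ s b

theorem pauliSparseConj_diagonalOn (k : Fin l) (δ : Fin 2 → ℂ) :
    PauliSparseConj l 2 (diagonal fun i => δ (i k)) := fun a => by
  rw [conj_diagonalOn_pauliString]
  exact replaceFactor_mem_sparseSpan k a (conj_diagonal_pauli_mem_sparseSpan δ (a k))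

theorem pauliSparseConj_TgateOn (k : Fin l) : PauliSparseConj l 2 (TgateOn l k) :=
  pauliSparseConj_diagonalOn k fun x => Complex.exp (Complex.I * Real.pi / 4 * ((x : ℕ) : ℂ))

theorem pauliSparseConj_circuit (gates : List ((Matrix (Fin l → Fin 2) (Fin l → Fin 2) ℂ) ⊕ Fin l))
    (hC : ∀ G, Sum.inl G ∈ gates → IsCliffordGate l G) :
    PauliSparseConj l (2 ^ gates.countP Sum.isRight)
      (gates.map (Sum.elim id (TgateOn l))).prod := by
  induction gates with
  | nil => simpa using pauliSparseConj_one
  | cons g gates ih =>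
    have hrest := ih fun G hG => hC G (List.mem_cons_of_mem g hG)
    rw [List.map_cons, List.prod_cons, List.countP_cons]
    cases g with
    | inl G => simpa using (hC G List.mem_cons_self).pauliSparseConj.mul hrest
    | inr k => simpa [pow_succ'] using (pauliSparseConj_TgateOn k).mul hrest

/-- If a circuit consists of Clifford gates and `t` T-gates, then the conjugate of any
Pauli string by the circuit is a linear combination of at most `2^t` Pauli strings. -/
theorem near_clifford_pauli_conjugation (l : ℕ)
    (gates : List ((Matrix (Fin l → Fin 2) (Fin l → Fin 2) ℂ) ⊕ Fin l))
    (hC : ∀ G, Sum.inl G ∈ gates → IsCliffordGate l G)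
    (t : ℕ) (ht : t = gates.countP Sum.isRight)
    (U : Matrix (Fin l → Fin 2) (Fin l → Fin 2) ℂ)
    (hU : U = (gates.map (Sum.elim id (TgateOn l))).prod) :
    ∀ a : Fin l → Fin 4, ∃ (S : Finset (Fin l → Fin 4)) (c : (Fin l → Fin 4) → ℂ),
      S.card ≤ 2 ^ t ∧ Uᴴ * pauliString l a * U = ∑ b ∈ S, c b • pauliString l b := by
  intro a
  subst ht hU
  obtain ⟨f, hf, hfa⟩ := pauliSparseConj_circuit gates hC a
  exact ⟨f.support, f, hf, by rw [← hfa, Finsupp.linearCombination_apply, Finsupp.sum]⟩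
end

section
/- Gurvits's permanent estimator is unbiased: for an n × n complex matrix A, Per(A) = E_{x ∈ {−1,1}^n}[ ∏_{i=1}^n (Ax)_i · ∏_{i=1}^n x_i ], where x is uniform over {−1,1}^n. -/
open Matrix

/-- The permanent of an `n × n` complex matrix. -/
noncomputable def perm (n : ℕ) (A : Matrix (Fin n) (Fin n) ℂ) : ℂ :=
  ∑ σ : Equiv.Perm (Fin n), ∏ i, A i (σ i)

/-- A random sign `±1` encoded by a Boolean. -/
def sgn (b : Bool) : ℂ := if b then 1 else -1

lemma sgn_mul_self (b : Bool) : sgn b * sgn b = 1 := by cases b <;> simp [sgn]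

lemma sgn_not (b : Bool) : sgn (!b) = - sgn b := by cases b <;> simp [sgn]

/-- Sum over sign vectors of ∏ x_i ∏ x_{f i}, when f is a permutation. -/
lemma S_perm (n : ℕ) (σ : Equiv.Perm (Fin n)) :
    ∑ x : Fin n → Bool, (∏ i, sgn (x i)) * ∏ i, sgn (x (σ i)) = (2 : ℂ) ^ n := by
  have h : ∀ x : Fin n → Bool,
      (∏ i, sgn (x i)) * ∏ i, sgn (x (σ i)) = 1 := by
    intro x
    rw [Equiv.prod_comp σ (fun i => sgn (x i)), ← Finset.prod_mul_distrib]
    simp [sgn_mul_self]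
  simp only [h]
  simp [Finset.card_univ]

lemma S_not_surj (n : ℕ) (f : Fin n → Fin n) (hf : ¬ Function.Surjective f) :
    ∑ x : Fin n → Bool, (∏ i, sgn (x i)) * ∏ i, sgn (x (f i)) = 0 := by
  rw [Function.Surjective] at hf
  push_neg at hf
  obtain ⟨j₀, hj₀⟩ := hf
  apply Finset.sum_ninvolution (fun x => Function.update x j₀ (! x j₀))
  · intro x
    have h1 : ∏ i, sgn (Function.update x j₀ (! x j₀) i) = - ∏ i, sgn (x i) := by
      rw [← Finset.prod_erase_mul _ _ (Finset.mem_univ j₀),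
          ← Finset.prod_erase_mul _ _ (Finset.mem_univ j₀)]
      have h2 : ∀ i ∈ Finset.univ.erase j₀,
          sgn (Function.update x j₀ (! x j₀) i) = sgn (x i) := by
        intro i hi
        rw [Function.update_of_ne (Finset.mem_erase.1 hi).1]
      rw [Finset.prod_congr rfl h2, Function.update_self, sgn_not]
      ring
    have h3 : ∏ i, sgn (Function.update x j₀ (! x j₀) (f i)) = ∏ i, sgn (x (f i)) := by
      apply Finset.prod_congr rfl
      intro i _
      rw [Function.update_of_ne (hj₀ i)]
    rw [h1, h3]
    ring
  · intro x _ h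
    have := congrFun h j₀
    simp at this
  · intro x
    exact Finset.mem_univ _
  · intro x
    ext i
    by_cases hi : i = j₀
    · subst hi; simp
    · simp [Function.update_of_ne hi]

/-- Gurvits's permanent estimator is unbiased:
`Per(A) = E_{x ∈ {−1,1}^n}[∏_i x_i ∏_i (Ax)_i]`, the expectation being the average
over all `2^n` sign vectors. -/
theorem gurvits_estimator_unbiased (n : ℕ) (A : Matrix (Fin n) (Fin n) ℂ) :
    perm n A = ((2 : ℂ) ^ n)⁻¹ *
      ∑ x : Fin n → Bool,
        (∏ i, sgn (x i)) * ∏ i, A.mulVec (fun j => sgn (x j)) i := by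
  have hexp : ∀ x : Fin n → Bool,
      (∏ i, sgn (x i)) * ∏ i, A.mulVec (fun j => sgn (x j)) i
      = ∑ f : Fin n → Fin n,
          (∏ i, A i (f i)) * ((∏ i, sgn (x i)) * ∏ i, sgn (x (f i))) := by
    intro x
    have h1 : ∏ i, A.mulVec (fun j => sgn (x j)) i
        = ∑ f : Fin n → Fin n, ∏ i, A i (f i) * sgn (x (f i)) := by
      have := Finset.prod_univ_sum (fun _ : Fin n => (Finset.univ : Finset (Fin n)))
        (fun i j => A i j * sgn (x j))
      simpa [Matrix.mulVec, dotProduct, Fintype.piFinset_univ] using this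
    rw [h1, Finset.mul_sum]
    apply Finset.sum_congr rfl
    intro f _
    rw [Finset.prod_mul_distrib]
    ring
  calc perm n A
      = ((2 : ℂ) ^ n)⁻¹ * ∑ σ : Equiv.Perm (Fin n), (∏ i, A i (σ i)) * (2 : ℂ) ^ n := by
        rw [perm, ← Finset.sum_mul, mul_comm (((2:ℂ)^n)⁻¹), mul_assoc,
          mul_inv_cancel₀ (pow_ne_zero _ two_ne_zero), mul_one]
    _ = ((2 : ℂ) ^ n)⁻¹ * ∑ f ∈ Finset.univ.filter (fun f : Fin n → Fin n =>
          Function.Bijective f),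
          (∏ i, A i (f i)) *
            (∑ x : Fin n → Bool, (∏ i, sgn (x i)) * ∏ i, sgn (x (f i))) := by
        congr 1
        refine Finset.sum_bij (fun (σ : Equiv.Perm (Fin n)) _ => (σ : Fin n → Fin n))
          ?_ ?_ ?_ ?_
        · intro σ _
          exact Finset.mem_filter.2 ⟨Finset.mem_univ _, σ.bijective⟩
        · intro σ _ τ _ h
          exact Equiv.coe_fn_injective h
        · intro f hf
          have hbij : Function.Bijective f := by simpa using hf
          exact ⟨Equiv.ofBijective f hbij, Finset.mem_univ _, rfl⟩
        · intro σ _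
          rw [S_perm]
    _ = ((2 : ℂ) ^ n)⁻¹ * ∑ f : Fin n → Fin n,
          (∏ i, A i (f i)) *
            (∑ x : Fin n → Bool, (∏ i, sgn (x i)) * ∏ i, sgn (x (f i))) := by
        congr 1
        apply Finset.sum_filter_of_ne
        intro f _ hne
        by_contra hbij
        have hsurj : ¬ Function.Surjective f := fun hs =>
          hbij (Finite.surjective_iff_bijective.1 hs)
        rw [S_not_surj n f hsurj, mul_zero] at hne
        exact hne rfl
    _ = ((2 : ℂ) ^ n)⁻¹ *
          ∑ x : Fin n → Bool,
            (∏ i, sgn (x i)) * ∏ i, A.mulVec (fun j => sgn (x j)) i := by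
        congr 1
        simp_rw [Finset.mul_sum]
        rw [Finset.sum_comm]
        exact Finset.sum_congr rfl fun x _ => (hexp x).symm
end
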